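/- If S is an ideal extension of the infinite cyclic group ℤ by a finite inverse semigroup with zero (so S has finitely many idempotents and its maximal subgroups are trivial or infinite cyclic), then S has the Howson property. -/

import Mathlib

inductive InvGen {S : Type*} [Mul S] [Inv S] (X : Set S) : S → Prop
  | base {x : S} : x ∈ X → InvGen X x
  | mul {a b : S} : InvGen X a → InvGen X b → InvGen X (a * b)
  | inv {a : S} : InvGen X a → InvGen X a⁻¹

def IsInvSub {S : Type*} [Mul S] [Inv S] (T : Set S) : Prop :=
  (∀ a ∈ T, ∀ b ∈ T, a * b ∈ T) ∧ ∀ a ∈ T, a⁻¹ ∈ T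

def InvFG {S : Type*} [Mul S] [Inv S] (T : Set S) : Prop :=
  ∃ X : Finset S, ↑X ⊆ T ∧ T = {s | InvGen (↑X : Set S) s}

def Howson (S : Type*) [Mul S] [Inv S] : Prop :=
  ∀ U V : Set S, IsInvSub U → IsInvSub V → InvFG U → InvFG V → InvFG (U ∩ V)
class InverseSemigroup (S : Type*) extends Semigroup S, Inv S where
  mul_inv_mul : ∀ a : S, a * a⁻¹ * a = a
  inv_invol : ∀ a : S, a⁻¹⁻¹ = a
  idem_comm : ∀ a b : S, (a * a⁻¹) * (b * b⁻¹) = (b * b⁻¹) * (a * a⁻¹)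

/-!
Every inverse subsemigroup `T` of `S` is finitely generated, so the Howson property holds
trivially. Indeed, the exponents `n` with `φ n ∈ T` form a subgroup of `ℤ` (when there are any),
which is cyclic; a generator of it together with the finitely many elements of `T` outside `Z`
generates `T`.
-/

open Set

section Generation

variable {S : Type*} [Mul S] [Inv S]

lemma InvGen.mem_of_isInvSub {X T : Set S} (hT : IsInvSub T) (hXT : X ⊆ T) {s : S}
    (hs : InvGen X s) : s ∈ T := by
  induction hs with
  | base h => exact hXT h
  | mul _ _ iha ihb => exact hT.1 _ iha _ ihb
  | inv _ ih => exact hT.2 _ ih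

lemma InvGen.mono {X Y : Set S} (hXY : X ⊆ Y) {s : S} (hs : InvGen X s) : InvGen Y s := by
  induction hs with
  | base h => exact .base (hXY h)
  | mul _ _ iha ihb => exact .mul iha ihb
  | inv _ ih => exact .inv ih

lemma IsInvSub.inter {U V : Set S} (hU : IsInvSub U) (hV : IsInvSub V) : IsInvSub (U ∩ V) :=
  ⟨fun a ha b hb => ⟨hU.1 a ha.1 b hb.1, hV.1 a ha.2 b hb.2⟩,
    fun a ha => ⟨hU.2 a ha.1, hV.2 a ha.2⟩⟩

lemma IsInvSub.invFG_of_generates {T : Set S} (hT : IsInvSub T) (X : Finset S) (hXT : ↑X ⊆ T)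
    (hgen : ∀ s ∈ T, InvGen (↑X : Set S) s) : InvFG T :=
  ⟨X, hXT, Subset.antisymm hgen fun _ hs => InvGen.mem_of_isInvSub hT hXT hs⟩

lemma IsInvSub.invFG_of_finite_diff {T R : Set S} (hT : IsInvSub T) (hfin : (T \ R).Finite)
    (hR : ∃ Y : Finset S, ↑Y ⊆ T ∧ ∀ s ∈ T ∩ R, InvGen (↑Y : Set S) s) : InvFG T := by
  classical
  obtain ⟨Y, hYT, hY⟩ := hR
  refine hT.invFG_of_generates (hfin.toFinset ∪ Y) ?_ fun s hs => ?_
  · simpa using union_subset (sdiff_subset (t := R)) hYT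
  · by_cases hsR : s ∈ R
    · exact (hY s ⟨hs, hsR⟩).mono (by simp)
    · exact .base (by simp [hs, hsR])

lemma howson_of_forall_invFG (h : ∀ T : Set S, IsInvSub T → InvFG T) : Howson S :=
  fun _ _ hU hV _ _ => h _ (hU.inter hV)

end Generation

section Cyclic

variable {S : Type*} [Mul S] [Inv S] {φ : ℤ → S}
  (hmul : ∀ a b : ℤ, φ (a + b) = φ a * φ b) (hinv : ∀ a : ℤ, φ (-a) = (φ a)⁻¹)
include hmul hinv

lemma InvGen.apply_mul {X : Set S} {d : ℤ} (hd : InvGen X (φ d)) (k : ℤ) :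
    InvGen X (φ (k * d)) := by
  induction k using Int.induction_on with
  | zero => rw [zero_mul, ← add_neg_cancel d, hmul, hinv]; exact .mul hd hd.inv
  | succ k ih => rw [add_mul, one_mul, hmul]; exact .mul ih hd
  | pred k ih => rw [sub_mul, one_mul, sub_eq_add_neg, hmul, hinv]; exact .mul ih hd.inv

def IsInvSub.preimageAddSubgroup {T : Set S} (hT : IsInvSub T) {n₀ : ℤ} (hn₀ : φ n₀ ∈ T) :
    AddSubgroup ℤ where
  carrier := {n | φ n ∈ T}
  add_mem' {a b} ha hb := by
    simp only [mem_ofPred_eq, hmul] at *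
    exact hT.1 _ ha _ hb
  zero_mem' := by
    simp only [mem_ofPred_eq]
    rw [← add_neg_cancel n₀, hmul, hinv]
    exact hT.1 _ hn₀ _ (hT.2 _ hn₀)
  neg_mem' {a} ha := by
    simp only [mem_ofPred_eq, hinv] at *
    exact hT.2 _ ha

lemma IsInvSub.exists_generators_inter_range {T : Set S} (hT : IsInvSub T) :
    ∃ Y : Finset S, ↑Y ⊆ T ∧ ∀ s ∈ T ∩ range φ, InvGen (↑Y : Set S) s := by
  classical
  by_cases hne : (T ∩ range φ).Nonempty
  · obtain ⟨_, hn₀T, n₀, rfl⟩ := hne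
    obtain ⟨d, hd⟩ := Int.subgroup_cyclic (hT.preimageAddSubgroup hmul hinv hn₀T)
    have hdT : φ d ∈ T :=
      show d ∈ hT.preimageAddSubgroup hmul hinv hn₀T from
        hd ▸ AddSubgroup.mem_closure_singleton_self d
    refine ⟨{φ d}, by simpa using hdT, ?_⟩
    rintro _ ⟨hnT, n, rfl⟩
    have hn : n ∈ hT.preimageAddSubgroup hmul hinv hn₀T := hnT
    rw [hd, AddSubgroup.mem_closure_singleton] at hn
    obtain ⟨k, rfl⟩ := hn
    rw [zsmul_eq_mul]
    exact InvGen.apply_mul hmul hinv (.base (by simp)) k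
  · exact ⟨∅, by simp, fun s hs => (hne ⟨s, hs⟩).elim⟩

lemma IsInvSub.invFG_of_finite_compl_range (hfin : (range φ)ᶜ.Finite) {T : Set S}
    (hT : IsInvSub T) : InvFG T :=
  hT.invFG_of_finite_diff (hfin.subset fun _ hs => hs.2)
    (hT.exists_generators_inter_range hmul hinv)

end Cyclic

theorem stmt_18_general {S : Type*} [InverseSemigroup S] (Z : Set S)
    (hfin : (Zᶜ : Set S).Finite)
    (φ : ℤ → S) (hrange : Set.range φ = Z)
    (hmul : ∀ a b : ℤ, φ (a + b) = φ a * φ b)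
    (hinv : ∀ a : ℤ, φ (-a) = (φ a)⁻¹) :
    Howson S := by
  subst hrange
  exact howson_of_forall_invFG fun _ hT => hT.invFG_of_finite_compl_range hmul hinv hfin

theorem stmt_18 {S : Type*} [InverseSemigroup S] (Z : Set S)
    (hideal : ∀ s : S, ∀ z ∈ Z, s * z ∈ Z ∧ z * s ∈ Z)
    (hfin : (Zᶜ : Set S).Finite)
    (φ : ℤ → S) (hinj : Function.Injective φ) (hrange : Set.range φ = Z)
    (hmul : ∀ a b : ℤ, φ (a + b) = φ a * φ b)
    (hinv : ∀ a : ℤ, φ (-a) = (φ a)⁻¹) :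
    Howson S :=
  stmt_18_general Z hfin φ hrange hmul hinv
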